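/- Let φ = c1 ∧ ⋯ ∧ cn be a propositional formula in 3-CNF, where each clause ci = L_{i,1} ∨ L_{i,2} ∨ L_{i,3} is a disjunction of literals over atoms of Σ, and let A, B be two atoms of Σ not occurring in φ. For a literal L, let L̃ = L if L is an atom C, and L̃ = not C if L = ¬C. Let Q = {A ← L̃_{i,1} ∧ L̃_{i,2} ∧ L̃_{i,3} : 1 ≤ i ≤ n}, P1 = Q ∪ {A × B ←}, and P2 = Q ∪ {A × B ←} ∪ {A ←}. Then φ is satisfiable (by a two-valued assignment of its variables) if and only if P1 and P2 are not logically equivalent in the four-valued logic. -/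
import Mathlib


/-- The four truth values F < F* < T* < T. -/
inductive V where
  | F | Fs | Ts | T
  deriving DecidableEq, Repr

def V.toNat : V → ℕ
  | .F => 0
  | .Fs => 1
  | .Ts => 2
  | .T => 3

instance : LinearOrder V :=
  LinearOrder.lift' V.toNat (by intro a b; cases a <;> cases b <;> simp [V.toNat])

/-- An LPOD rule `hd × hds(1) × ⋯ × hds(k) ← pos(1) ∧ ⋯ ∧ not neg(1) ∧ ⋯`. -/
structure Rule where
  hd : ℕ
  hds : List ℕ
  pos : List ℕ
  neg : List ℕ
  deriving DecidableEq, Repr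

/-- Value of an ordered disjunction `c × cs(1) × ⋯ × cs(k)` of atoms. -/
def evalHead (I : ℕ → V) : ℕ → List ℕ → V
  | c, [] => I c
  | c, c' :: cs => if I c = V.Fs then evalHead I c' cs else I c

/-- Value of `not φ` given the value of `φ`. -/
def evalNot (v : V) : V := if v ≤ V.Fs then V.T else V.F

/-- Value of the body of a rule (the empty body evaluates to `T`). -/
def evalBody (I : ℕ → V) (r : Rule) : V :=
  ((r.pos.map I) ++ (r.neg.map (fun b => evalNot (I b)))).foldr min V.T

/-- A rule evaluates to `T` under `I` (i.e. `I(head) ≥ I(body)`). -/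
def Rule.sat (I : ℕ → V) (r : Rule) : Prop :=
  evalBody I r ≤ evalHead I r.hd r.hds

/-- An LPOD: a finite set of rules. -/
abbrev Program := Finset Rule

def isModel (I : ℕ → V) (P : Program) : Prop := ∀ r ∈ P, r.sat I

/-- Logical equivalence in the four-valued logic: same models. -/
def logEquiv (P1 P2 : Program) : Prop := ∀ I : ℕ → V, isModel I P1 ↔ isModel I P2

def Rule.atoms (r : Rule) : Finset ℕ :=
  {r.hd} ∪ r.hds.toFinset ∪ r.pos.toFinset ∪ r.neg.toFinset

/-- The atoms occurring in a program. -/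
def progAtoms (P : Program) : Finset ℕ := P.biUnion Rule.atoms

/-- The ordering `⪯` on truth values: reflexive closure of
    `F ≺ F*`, `F ≺ T*`, `F ≺ T`, `T* ≺ T`. -/
def V.pre (v1 v2 : V) : Prop :=
  v1 = v2 ∨ (v1 = V.F ∧ v2 ≠ V.F) ∨ (v1 = V.Ts ∧ v2 = V.T)

/-- `I1 ⪯ I2` relative to the atoms of `P`. -/
def interpLe (P : Program) (I1 I2 : ℕ → V) : Prop :=
  ∀ A ∈ progAtoms P, V.pre (I1 A) (I2 A)

/-- `I` is solid for `P`: no atom of `P` gets the value `T*`. -/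
def solid (P : Program) (I : ℕ → V) : Prop :=
  ∀ A ∈ progAtoms P, I A ≠ V.Ts

/-- An answer set of `P`: a `⪯`-minimal model of `P` that is solid. -/
def answerSet (P : Program) (M : ℕ → V) : Prop :=
  isModel M P ∧ solid P M ∧
    ∀ N : ℕ → V, isModel N P → interpLe P N M → interpLe P M N

/-- The atoms of `P` receiving the value `F*` under `M`. -/
def fstars (P : Program) (M : ℕ → V) : Finset ℕ :=
  (progAtoms P).filter (fun A => M A = V.Fs)

/-- A most-preferred answer set: `⊏`-minimal among the answer sets. -/
def mostPreferred (P : Program) (M : ℕ → V) : Prop :=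
  answerSet P M ∧ ∀ N : ℕ → V, answerSet P N → ¬ fstars P N ⊂ fstars P M

/-- Strong equivalence under the most-preferred answer sets. -/
def seMost (P1 P2 : Program) : Prop :=
  ∀ P : Program, ∀ M : ℕ → V, mostPreferred (P1 ∪ P) M ↔ mostPreferred (P2 ∪ P) M

/-- Strong equivalence under all the answer sets. -/
def seAll (P1 P2 : Program) : Prop :=
  ∀ P : Program, ∀ M : ℕ → V, answerSet (P1 ∪ P) M ↔ answerSet (P2 ∪ P) M

/-- A normal logic program: every rule has a single atom as head. -/
def normalProg (P : Program) : Prop := ∀ r ∈ P, r.hds = []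

/-- `X` is closed under the rules of the Gelfond–Lifschitz reduct `P^S`. -/
def reductClosed (P : Program) (S X : Set ℕ) : Prop :=
  ∀ r ∈ P, (∀ b ∈ r.neg, b ∉ S) → (∀ a ∈ r.pos, a ∈ X) → r.hd ∈ X

/-- `S` is a stable model (standard answer set): the least Herbrand model of `P^S`. -/
def stableModel (P : Program) (S : Set ℕ) : Prop :=
  reductClosed P S S ∧ ∀ X : Set ℕ, reductClosed P S X → S ⊆ X

/-- `I` is three-valued for `P`: no atom of `P` gets the value `F*`. -/
def threeValued (P : Program) (I : ℕ → V) : Prop :=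
  ∀ A ∈ progAtoms P, I A ≠ V.Fs

/-- A propositional literal: an atom together with its sign (`true` = positive). -/
abbrev Lit := ℕ × Bool

/-- A 3-clause `L₁ ∨ L₂ ∨ L₃`. -/
abbrev Clause := Lit × Lit × Lit

def Clause.lits (c : Clause) : List Lit := [c.1, c.2.1, c.2.2]

/-- The rule `A ← L̃₁ ∧ L̃₂ ∧ L̃₃` corresponding to a clause. -/
def clauseRule (A : ℕ) (c : Clause) : Rule :=
  ⟨A, [],
    (c.lits.filter (fun l => l.2)).map Prod.fst,
    (c.lits.filter (fun l => !l.2)).map Prod.fst⟩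

/-- The atoms occurring in a 3-CNF formula. -/
def cnfAtoms (φ : List Clause) : Finset ℕ :=
  φ.toFinset.biUnion (fun c => (c.lits.map Prod.fst).toFinset)

/-- A two-valued assignment `J` satisfies a CNF formula. -/
def cnfSat (J : ℕ → Bool) (φ : List Clause) : Prop :=
  ∀ c ∈ φ, ∃ l ∈ c.lits, J l.1 = l.2

/-- The program `Q = {A ← L̃ᵢ₁ ∧ L̃ᵢ₂ ∧ L̃ᵢ₃ : 1 ≤ i ≤ n}`. -/
def Qprog (A : ℕ) (φ : List Clause) : Program :=
  φ.toFinset.image (clauseRule A)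

/-- `P1 = Q ∪ {A × B ←}`. -/
def P1prog (A B : ℕ) (φ : List Clause) : Program :=
  Qprog A φ ∪ {Rule.mk A [B] [] []}

/-- `P2 = Q ∪ {A × B ←} ∪ {A ←}`. -/
def P2prog (A B : ℕ) (φ : List Clause) : Program :=
  Qprog A φ ∪ {Rule.mk A [B] [] []} ∪ {Rule.mk A [] [] []}


lemma V.le_T (v : V) : v ≤ V.T := by cases v <;> decide

lemma foldr_min_le_fs (l : List V) : l.foldr min V.T ≤ V.Fs ↔ ∃ x ∈ l, x ≤ V.Fs := by
  induction l with
  | nil => simpa using (by decide : ¬ V.T ≤ V.Fs)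
  | cons a l ih => simp [min_le_iff, ih]

lemma evalNot_le_fs (v : V) : evalNot v ≤ V.Fs ↔ V.Ts ≤ v := by
  cases v <;> simp [evalNot] <;> decide

lemma body_le_fs (I : ℕ → V) (r : Rule) :
    evalBody I r ≤ V.Fs ↔ (∃ p ∈ r.pos, I p ≤ V.Fs) ∨ (∃ b ∈ r.neg, V.Ts ≤ I b) := by
  rw [evalBody, foldr_min_le_fs]
  constructor
  · rintro ⟨x, hx, hle⟩
    rw [List.mem_append] at hx
    rcases hx with hx | hx
    · obtain ⟨a, ha, rfl⟩ := List.mem_map.mp hx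
      exact Or.inl ⟨a, ha, hle⟩
    · obtain ⟨a, ha, rfl⟩ := List.mem_map.mp hx
      exact Or.inr ⟨a, ha, (evalNot_le_fs _).mp hle⟩
  · rintro (⟨a, ha, hle⟩ | ⟨a, ha, hle⟩)
    · exact ⟨I a, List.mem_append.mpr (Or.inl (List.mem_map.mpr ⟨a, ha, rfl⟩)), hle⟩
    · exact ⟨evalNot (I a), List.mem_append.mpr (Or.inr (List.mem_map.mpr ⟨a, ha, rfl⟩)),
        (evalNot_le_fs _).mpr hle⟩

lemma mem_cnfAtoms {φ : List Clause} {c : Clause} {l : Lit}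
    (hc : c ∈ φ) (hl : l ∈ c.lits) : l.1 ∈ cnfAtoms φ := by
  rw [cnfAtoms, Finset.mem_biUnion]
  exact ⟨c, List.mem_toFinset.mpr hc,
    List.mem_toFinset.mpr (List.mem_map.mpr ⟨l, hl, rfl⟩)⟩

/-- `φ` is satisfiable iff `P1` and `P2` are not logically
equivalent in the four-valued logic. -/
theorem sat_iff_not_logEquiv (φ : List Clause) (A B : ℕ)
    (hA : A ∉ cnfAtoms φ) (hB : B ∉ cnfAtoms φ) (hAB : A ≠ B) :
    (∃ J : ℕ → Bool, cnfSat J φ) ↔ ¬ logEquiv (P1prog A B φ) (P2prog A B φ) := by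
  constructor
  · rintro ⟨J, hJ⟩ hle
    set I : ℕ → V := fun x => if x = A then V.Fs else if x = B then V.T
      else if J x then V.F else V.T with hI
    have hIA : I A = V.Fs := by simp [hI]
    have hIB : I B = V.T := by simp [hI, Ne.symm hAB]
    have hmod1 : isModel I (P1prog A B φ) := by
      intro r hr
      rw [P1prog, Finset.mem_union] at hr
      rcases hr with hr | hr
      · rw [Qprog, Finset.mem_image] at hr
        obtain ⟨c, hc, rfl⟩ := hr
        have hcφ : c ∈ φ := List.mem_toFinset.mp hc
        obtain ⟨l, hl, hsat⟩ := hJ c hcφ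
        obtain ⟨p, s⟩ := l
        have hlA : p ≠ A := fun h => hA (h ▸ mem_cnfAtoms hcφ hl)
        have hlB : p ≠ B := fun h => hB (h ▸ mem_cnfAtoms hcφ hl)
        have hbody : evalBody I (clauseRule A c) ≤ V.Fs := by
          rw [body_le_fs]
          cases s with
          | true =>
            left
            refine ⟨p, ?_, ?_⟩
            · simpa [clauseRule, List.mem_map, List.mem_filter] using hl
            · have : J p = true := hsat
              simp [hI, hlA, hlB, this]
              decide
          | false =>
            right
            refine ⟨p, ?_, ?_⟩
            · simpa [clauseRule, List.mem_map, List.mem_filter] using hl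
            · have : J p = false := hsat
              simp [hI, hlA, hlB, this]
              decide
        show evalBody I _ ≤ evalHead I A []
        calc evalBody I (clauseRule A c) ≤ V.Fs := hbody
          _ ≤ evalHead I A [] := by simp [evalHead, hIA]
      · rw [Finset.mem_singleton] at hr; subst hr
        show evalBody I _ ≤ evalHead I A [B]
        simp [evalBody, evalHead, hIA, hIB]
    have hmod2 : ¬ isModel I (P2prog A B φ) := by
      intro h
      have := h (Rule.mk A [] [] []) (by simp [P2prog])
      rw [Rule.sat] at this
      simp [evalBody, evalHead, hIA] at this
      exact (by decide : ¬ V.T ≤ V.Fs) this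
    exact hmod2 ((hle I).mp hmod1)
  · intro hne
    by_contra hns
    push_neg at hns
    apply hne
    intro I
    have hP2T : ∀ I' : ℕ → V, I' A = V.T → isModel I' (P2prog A B φ) := by
      intro I' hT r hr
      rw [P2prog, Finset.mem_union, Finset.mem_union] at hr
      rcases hr with (hr | hr) | hr
      · rw [Qprog, Finset.mem_image] at hr
        obtain ⟨c, hc, rfl⟩ := hr
        show evalBody I' _ ≤ evalHead I' A []
        simp [evalHead, hT]
        exact V.le_T _
      · rw [Finset.mem_singleton] at hr; subst hr
        show evalBody I' _ ≤ evalHead I' A [B]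
        simp [evalBody, evalHead, hT]
      · rw [Finset.mem_singleton] at hr; subst hr
        show evalBody I' _ ≤ evalHead I' A []
        simp [evalBody, evalHead, hT]
    have hP2toP1 : ∀ I' : ℕ → V, isModel I' (P2prog A B φ) → isModel I' (P1prog A B φ) := by
      intro I' h r hr
      apply h
      rw [P1prog, Finset.mem_union] at hr
      rw [P2prog, Finset.mem_union, Finset.mem_union]
      rcases hr with hr | hr
      · exact Or.inl (Or.inl hr)
      · exact Or.inl (Or.inr hr)
    constructor
    · intro h1
      have hAx := h1 (Rule.mk A [B] [] []) (by simp [P1prog])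
      rw [Rule.sat] at hAx
      simp [evalBody] at hAx
      by_cases hFs : I A = V.Fs
      · exfalso
        apply hns (fun x => decide (I x ≤ V.Fs))
        intro c hc
        have hcr := h1 (clauseRule A c)
          (by rw [P1prog, Finset.mem_union]; left
              rw [Qprog, Finset.mem_image]
              exact ⟨c, List.mem_toFinset.mpr hc, rfl⟩)
        rw [Rule.sat] at hcr
        have hcr' : evalBody I (clauseRule A c) ≤ V.Fs := by
          simpa [clauseRule, evalHead, hFs] using hcr
        rw [body_le_fs] at hcr'
        rcases hcr' with ⟨p, hp, hple⟩ | ⟨b, hb, hble⟩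
        · simp [clauseRule, List.mem_map, List.mem_filter] at hp
          refine ⟨(p, true), hp, ?_⟩
          simpa using hple
        · simp [clauseRule, List.mem_map, List.mem_filter] at hb
          refine ⟨(b, false), hb, ?_⟩
          have : ¬ I b ≤ V.Fs := fun hle' =>
            absurd (le_trans hble hle') (by decide)
          simpa using this
      · rw [evalHead, if_neg hFs] at hAx
        have hT : I A = V.T := le_antisymm (V.le_T _) hAx
        exact hP2T I hT
    · exact hP2toP1 I
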